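/- Let d ∈ {3,4}, a = 1, ω < 0, and define F(X) = (2ω + (d-2)X/(1+X))·X - d·(X - log(1+X)) for X ≥ 0. Then F(0) = 0 and F'(X) = (2X²(ω-1) + X(4ω-(4-d)) + 2ω)/(1+X)² < 0 for all X ≥ 0; consequently F(X) < 0 for all X > 0. -/

import Mathlib

lemma stmt_14_hasDeriv (dd ω : ℝ) (x : ℝ) (hx : 0 ≤ x) :
    HasDerivAt (fun X : ℝ => (2 * ω + (dd - 2) * X / (1 + X)) * X - dd * (X - Real.log (1 + X)))
      ((2 * x ^ 2 * (ω - 1) + x * (4 * ω - (4 - dd)) + 2 * ω) / (1 + x) ^ 2) x := by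
  have hne : (1 : ℝ) + x ≠ 0 := by positivity
  have h1 : HasDerivAt (fun X : ℝ => 1 + X) 1 x := by
    simpa using (hasDerivAt_id x).const_add (1 : ℝ)
  have hlog : HasDerivAt (fun X : ℝ => Real.log (1 + X)) (1 / (1 + x)) x := by
    simpa using h1.log hne
  have hq : HasDerivAt (fun X : ℝ => (dd - 2) * X / (1 + X))
      (((dd - 2) * 1 * (1 + x) - (dd - 2) * x * 1) / (1 + x) ^ 2) x := by
    simpa [Pi.div_def] using ((hasDerivAt_id x).const_mul (dd - 2)).div h1 hne
  have hF : HasDerivAt (fun X : ℝ => (2 * ω + (dd - 2) * X / (1 + X)) * X - dd * (X - Real.log (1 + X))) _ x := ((hq.const_add (2 * ω)).mul (hasDerivAt_id x)).sub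
    (((hasDerivAt_id x).sub hlog).const_mul dd)
  convert hF using 1
  field_simp
  simp only [id]
  ring

/-- For `d ∈ {3,4}`, `a = 1`, `ω < 0` and
`F(X) = (2ω + (d-2)X/(1+X))·X - d·(X - log(1+X))`, one has `F(0) = 0`,
`F'(X) = (2X²(ω-1) + X(4ω-(4-d)) + 2ω)/(1+X)² < 0` for `X ≥ 0`, and `F(X) < 0` for `X > 0`. -/
theorem stmt_14 (d : ℕ) (hd : d = 3 ∨ d = 4) (ω : ℝ) (hω : ω < 0) :
    ((2 * ω + ((d : ℝ) - 2) * 0 / (1 + 0)) * 0 - (d : ℝ) * (0 - Real.log (1 + 0)) = 0) ∧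
    (∀ X : ℝ, 0 ≤ X →
      deriv (fun X : ℝ => (2 * ω + ((d : ℝ) - 2) * X / (1 + X)) * X -
          (d : ℝ) * (X - Real.log (1 + X))) X =
        (2 * X ^ 2 * (ω - 1) + X * (4 * ω - (4 - (d : ℝ))) + 2 * ω) / (1 + X) ^ 2 ∧
      (2 * X ^ 2 * (ω - 1) + X * (4 * ω - (4 - (d : ℝ))) + 2 * ω) / (1 + X) ^ 2 < 0) ∧
    (∀ X : ℝ, 0 < X →
      (2 * ω + ((d : ℝ) - 2) * X / (1 + X)) * X - (d : ℝ) * (X - Real.log (1 + X)) < 0) := by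
  have hd4 : (d : ℝ) ≤ 4 := by rcases hd with h | h <;> simp [h]; norm_num
  have hneg : ∀ X : ℝ, 0 ≤ X →
      (2 * X ^ 2 * (ω - 1) + X * (4 * ω - (4 - (d : ℝ))) + 2 * ω) / (1 + X) ^ 2 < 0 := by
    intro X hX
    apply div_neg_of_neg_of_pos _ (by positivity)
    nlinarith [sq_nonneg X, mul_nonneg hX hX]
  refine ⟨by simp, fun X hX => ⟨(stmt_14_hasDeriv d ω X hX).deriv, hneg X hX⟩, ?_⟩
  intro X hX
  have hanti : StrictAntiOn
      (fun X : ℝ => (2 * ω + ((d : ℝ) - 2) * X / (1 + X)) * X -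
        (d : ℝ) * (X - Real.log (1 + X))) (Set.Ici 0) := by
    apply strictAntiOn_of_deriv_neg (convex_Ici 0)
    · exact fun x hx => (stmt_14_hasDeriv d ω x hx).differentiableAt.continuousAt.continuousWithinAt
    · intro x hx
      rw [interior_Ici] at hx
      rw [(stmt_14_hasDeriv d ω x hx.le).deriv]
      exact hneg x hx.le
  have := hanti (Set.self_mem_Ici) (Set.mem_Ici.mpr hX.le) hX
  simpa using this
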